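/- The algebra ℂ⟨x,y⟩/⟨xyx⟩ has exponential growth: for any k ≥ 1 and any integers m_1,…,m_k ≥ 2, the monomials x y^{m_1} x y^{m_2} ⋯ x y^{m_k} are linearly independent in ℂ⟨x,y⟩/⟨xyx⟩. In contrast, ℂ⟨x,y⟩/⟨xyx−1⟩ is commutative (since xy = yx in this quotient), hence has polynomial growth; consequently the natural surjection ℂ⟨x,y⟩/⟨xyx⟩ → gr(ℂ⟨x,y⟩/⟨xyx−1⟩) is not injective. -/

import Mathlib

/-- The relation presenting `ℂ⟨x,y⟩/⟨xyx⟩`. -/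
def relXYX : FreeAlgebra ℂ (Fin 2) → FreeAlgebra ℂ (Fin 2) → Prop :=
  fun a b =>
    a = FreeAlgebra.ι ℂ (0 : Fin 2) * FreeAlgebra.ι ℂ (1 : Fin 2) *
      FreeAlgebra.ι ℂ (0 : Fin 2) ∧ b = 0

/-- The relation presenting `ℂ⟨x,y⟩/⟨xyx − 1⟩`. -/
def relXYX1 : FreeAlgebra ℂ (Fin 2) → FreeAlgebra ℂ (Fin 2) → Prop :=
  fun a b =>
    a = FreeAlgebra.ι ℂ (0 : Fin 2) * FreeAlgebra.ι ℂ (1 : Fin 2) *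
      FreeAlgebra.ι ℂ (0 : Fin 2) ∧ b = 1

/-!
`R⟨X⟩/⟨p⟩` for a word `p` acts on the free module on words: a letter prepends itself and sends
the result to `0` as soon as it contains `p`. Applied to the empty word, a word `w` that avoids
`p` gives back `w` itself, so distinct `p`-avoiding words stay linearly independent in the
quotient. The words
`x y^{m₁} ⋯ x y^{m_k}` with all `mᵢ ≥ 2` avoid `xyx` and are pairwise distinct.

In the other quotient `xyx = 1` makes `x` invertible with `x⁻¹ = yx = xy`.
-/

namespace FreeAlgebra

variable {R X : Type*} [CommSemiring R] [DecidableEq X] (p : List X)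

noncomputable def prependAvoiding (a : X) : (List X →₀ R) →ₗ[R] (List X →₀ R) :=
  Finsupp.lsum R fun w => if p <:+: a :: w then 0 else Finsupp.lsingle (a :: w)

noncomputable def avoidingRep : FreeAlgebra R X →ₐ[R] Module.End R (List X →₀ R) :=
  lift R (prependAvoiding p)

variable {p}

lemma prependAvoiding_single (a : X) (w : List X) (c : R) :
    prependAvoiding p a (Finsupp.single w c) =
      if p <:+: a :: w then 0 else Finsupp.single (a :: w) c := by
  rw [prependAvoiding, Finsupp.lsum_single]
  split_ifs <;> simp

-- The empty word acts as the identity, so it alone does not kill words already containing `p`.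
lemma avoidingRep_prod_single {w u : List X} (h : w ≠ [] ∨ ¬ p <:+: u) (c : R) :
    avoidingRep p ((w.map (ι R)).prod) (Finsupp.single u c) =
      if p <:+: w ++ u then 0 else Finsupp.single (w ++ u) c := by
  induction w with
  | nil => simp [h.resolve_left (by simp)]
  | cons a w ih =>
    rw [List.map_cons, List.prod_cons, map_mul, Module.End.mul_apply, avoidingRep, lift_ι_apply]
    by_cases hw : w ≠ [] ∨ ¬ p <:+: u
    · rw [← avoidingRep, ih hw, List.cons_append]
      by_cases h₁ : p <:+: w ++ u
      · simp [h₁, List.infix_cons h₁]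
      · rw [if_neg h₁, prependAvoiding_single]
    · obtain ⟨rfl, hu⟩ : w = [] ∧ p <:+: u := by tauto
      simp [prependAvoiding_single, List.infix_cons hu]

lemma avoidingRep_prod_self (hp : p ≠ []) : avoidingRep p ((p.map (ι R)).prod) = 0 :=
  Finsupp.lhom_ext fun u c => by
    simp [avoidingRep_prod_single (.inl hp), List.infix_append_left]

theorem linearIndependent_mkAlgHom_prod_of_not_infix
    {r : FreeAlgebra R X → FreeAlgebra R X → Prop} (hp : p ≠ [])
    (hr : ∀ ⦃a b⦄, r a b → a = (p.map (ι R)).prod ∧ b = 0)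
    {ι' : Type*} {w : ι' → List X} (hw : Function.Injective w) (hwp : ∀ i, ¬ p <:+: w i) :
    LinearIndependent R fun i => RingQuot.mkAlgHom R r ((w i).map (ι R)).prod := by
  let ρ : RingQuot r →ₐ[R] Module.End R (List X →₀ R) :=
    RingQuot.liftAlgHom R ⟨avoidingRep p, fun a b hab => by
      obtain ⟨rfl, rfl⟩ := hr hab
      rw [avoidingRep_prod_self hp, map_zero]⟩
  refine LinearIndependent.of_comp
    ((LinearMap.applyₗ (Finsupp.single [] 1)).comp ρ.toLinearMap) ?_
  convert (Finsupp.linearIndependent_single_one R (List X)).comp w hw using 1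
  funext i
  simp [ρ, avoidingRep_prod_single (.inr (mt List.infix_nil.1 hp)), hwp]

end FreeAlgebra

namespace List

variable {α : Type*} {a b : α}

lemma replicate_append_inj_of_head?_ne {m n : ℕ} {l l' : List α} (hl : l.head? ≠ some b)
    (hl' : l'.head? ≠ some b) (h : replicate m b ++ l = replicate n b ++ l') :
    m = n ∧ l = l' := by
  induction m generalizing n with
  | zero =>
    cases n with
    | zero => simpa using h
    | succ n =>
      rw [replicate_zero, nil_append] at h
      simp [h, replicate_succ] at hl
  | succ m ih =>
    cases n with
    | zero =>
      rw [replicate_zero, nil_append] at h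
      simp [← h, replicate_succ] at hl'
    | succ n => simpa using ih (by simpa [replicate_succ] using h)

lemma head?_flatMap_cons_replicate_ne (hab : a ≠ b) (ms : List ℕ) :
    (ms.flatMap fun m => a :: replicate m b).head? ≠ some b := by
  cases ms <;> simp [hab]

lemma flatMap_cons_replicate_injective (hab : a ≠ b) :
    Function.Injective fun ms : List ℕ => ms.flatMap fun m => a :: replicate m b := by
  intro ms ms' h
  induction ms generalizing ms' with
  | nil => cases ms' <;> simp_all
  | cons m ms ih =>
    cases ms' with
    | nil => simp at h
    | cons m' ms' =>
      obtain ⟨rfl, htail⟩ := replicate_append_inj_of_head?_ne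
        (head?_flatMap_cons_replicate_ne hab ms) (head?_flatMap_cons_replicate_ne hab ms')
        (by simpa using h)
      rw [ih htail]

lemma not_infix_replicate_append (hab : a ≠ b) {l : List α} (hl : ¬ [a, b, a] <:+: l) (n : ℕ) :
    ¬ [a, b, a] <:+: replicate n b ++ l := by
  induction n with
  | zero => simpa using hl
  | succ n ih => simp [replicate_succ, infix_cons_iff, hab, ih]

lemma not_infix_cons_replicate_append (hab : a ≠ b) {l : List α} (hl : ¬ [a, b, a] <:+: l)
    {n : ℕ} (hn : 2 ≤ n) : ¬ [a, b, a] <:+: a :: (replicate n b ++ l) := by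
  obtain ⟨n, rfl⟩ := Nat.exists_eq_add_of_le' hn
  simp [infix_cons_iff, replicate_succ, hab, not_infix_replicate_append hab hl]

lemma not_infix_flatMap_cons_replicate (hab : a ≠ b) {ms : List ℕ} (hms : ∀ m ∈ ms, 2 ≤ m) :
    ¬ [a, b, a] <:+: ms.flatMap fun m => a :: replicate m b := by
  induction ms with
  | nil => simp
  | cons m ms ih =>
    simp only [flatMap_cons]
    exact not_infix_cons_replicate_append hab (ih fun k hk => hms k (mem_cons_of_mem _ hk))
      (hms m mem_cons_self)

lemma prod_map_flatMap_cons_replicate {M : Type*} [Monoid M] (f : α → M) (ms : List ℕ) :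
    ((ms.flatMap fun m => a :: replicate m b).map f).prod =
      (ms.map fun m => f a * f b ^ m).prod := by
  induction ms with
  | nil => rfl
  | cons m ms ih => simp [ih, prod_replicate, mul_assoc]

lemma ofFn_sigma_subtype_injective {P : ∀ k, (Fin (k + 1) → α) → Prop} :
    Function.Injective fun s : Σ k, {m : Fin (k + 1) → α // P k m} => ofFn s.2.1 := by
  rintro ⟨k, m, hm⟩ ⟨k', m', hm'⟩ h
  obtain ⟨hk, hmm⟩ := Sigma.mk.inj_iff.1 (ofFn_inj'.1 h)
  obtain rfl : k = k' := by simpa using hk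
  obtain rfl : m = m' := eq_of_heq hmm
  rfl

end List

theorem mul_comm_of_mul_mul_eq_one {M : Type*} [Monoid M] {x y : M} (h : x * y * x = 1) :
    x * y = y * x :=
  calc x * y = x * y * (x * y * x) := by rw [h, mul_one]
    _ = x * y * x * (y * x) := by simp only [mul_assoc]
    _ = y * x := by rw [h, one_mul]

lemma relXYX_iff {a b : FreeAlgebra ℂ (Fin 2)} :
    relXYX a b ↔ a = ([0, 1, 0].map (FreeAlgebra.ι ℂ)).prod ∧ b = 0 := by
  simp [relXYX, mul_assoc]

/-- (a) In `ℂ⟨x,y⟩/⟨xyx⟩`, the monomials `x y^{m₁} x y^{m₂} ⋯ x y^{m_k}` over all `k ≥ 1` and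
all `m₁,…,m_k ≥ 2` are linearly independent (so the algebra has exponential growth).
(b) In `ℂ⟨x,y⟩/⟨xyx − 1⟩`, `xy = yx` (so that quotient is commutative). -/
theorem stmt19 :
    (letI x := RingQuot.mkAlgHom ℂ relXYX (FreeAlgebra.ι ℂ (0 : Fin 2))
     letI y := RingQuot.mkAlgHom ℂ relXYX (FreeAlgebra.ι ℂ (1 : Fin 2))
     LinearIndependent ℂ
       (fun w : Σ k : ℕ, {m : Fin (k + 1) → ℕ // ∀ i, 2 ≤ m i} =>
         (List.ofFn fun i : Fin (w.1 + 1) => x * y ^ (w.2.1 i)).prod)) ∧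
    (RingQuot.mkAlgHom ℂ relXYX1 (FreeAlgebra.ι ℂ (0 : Fin 2)) *
        RingQuot.mkAlgHom ℂ relXYX1 (FreeAlgebra.ι ℂ (1 : Fin 2)) =
      RingQuot.mkAlgHom ℂ relXYX1 (FreeAlgebra.ι ℂ (1 : Fin 2)) *
        RingQuot.mkAlgHom ℂ relXYX1 (FreeAlgebra.ι ℂ (0 : Fin 2))) := by
  have h01 : (0 : Fin 2) ≠ 1 := by decide
  refine ⟨?_, mul_comm_of_mul_mul_eq_one ?_⟩
  · let word (s : Σ k : ℕ, {m : Fin (k + 1) → ℕ // ∀ i, 2 ≤ m i}) : List (Fin 2) :=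
      (List.ofFn s.2.1).flatMap fun m => 0 :: List.replicate m 1
    have hmonomial (s : Σ k : ℕ, {m : Fin (k + 1) → ℕ // ∀ i, 2 ≤ m i}) :
        (List.ofFn fun i => RingQuot.mkAlgHom ℂ relXYX (FreeAlgebra.ι ℂ 0) *
          RingQuot.mkAlgHom ℂ relXYX (FreeAlgebra.ι ℂ 1) ^ (s.2.1 i)).prod =
          RingQuot.mkAlgHom ℂ relXYX ((word s).map (FreeAlgebra.ι ℂ)).prod := by
      simp only [word, List.prod_map_flatMap_cons_replicate, map_list_prod, List.map_ofFn,
        Function.comp_def, map_mul, map_pow]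
    simp only [hmonomial]
    exact FreeAlgebra.linearIndependent_mkAlgHom_prod_of_not_infix (by simp)
      (fun a b hab => relXYX_iff.1 hab)
      ((List.flatMap_cons_replicate_injective h01).comp List.ofFn_sigma_subtype_injective)
      (fun s => List.not_infix_flatMap_cons_replicate h01 (List.forall_mem_ofFn_iff.2 s.2.2))
  · simpa only [map_mul, map_one] using
      RingQuot.mkAlgHom_rel ℂ (show relXYX1 _ 1 from ⟨rfl, rfl⟩)
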